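/- arXiv:2208.06442 — 6 statements merged into one kernel-verified Lean document; each statement's English description precedes it below -/
import Mathlib

section
/- For every n ≥ 2, the class H' = {h_p : p prime}, where h_p(x) = 0 iff p divides x and x > p, shatters a set of n integers; hence the VC-dimension of H' is infinite. -/
/-- `hp p x` is the hypothesis `h_p` : it is `false` iff `p ∣ x` and `x > p`. -/
def hp (p x : ℕ) : Bool := !(p ∣ x ∧ p < x : Bool)

/-- The class `H' = {h_p : p prime}` shatters the finite set `C ⊆ {2,3,…}`. -/
def ShattersPrimes (C : Finset ℕ) : Prop :=
  ∀ f : ℕ → Bool, ∃ p : ℕ, p.Prime ∧ ∀ c ∈ C, hp p c = f c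

/-- A prime indexed by a finite set of naturals. -/
noncomputable def Pr (T : Finset ℕ) : ℕ := Nat.nth Nat.Prime (Encodable.encode T)

lemma Pr_prime (T : Finset ℕ) : (Pr T).Prime := Nat.prime_nth_prime _

lemma Pr_injective : Function.Injective Pr := by
  intro a b h
  exact Encodable.encode_injective
    (Nat.nth_injective Nat.infinite_setOf_prime h)

/-- The family of index sets containing `i`. -/
noncomputable def Sset (n i : ℕ) : Finset (Finset ℕ) :=
  (Finset.range n).powerset.filter (fun T => i ∈ T)

/-- The element associated to coordinate `i`. -/
noncomputable def cf (n i : ℕ) : ℕ := ∏ T ∈ Sset n i, Pr T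

lemma Pr_dvd_cf_iff {n i : ℕ} (T : Finset ℕ) :
    Pr T ∣ cf n i ↔ T ∈ Sset n i := by
  rw [cf, (Pr_prime T).prime.dvd_finset_prod_iff]
  constructor
  · rintro ⟨T', hT', hdvd⟩
    rcases ((Nat.prime_dvd_prime_iff_eq (Pr_prime T) (Pr_prime T')).mp hdvd) with h
    rwa [Pr_injective h]
  · intro h; exact ⟨T, h, dvd_rfl⟩

lemma two_le_Pr (T : Finset ℕ) : 2 ≤ Pr T := (Pr_prime T).two_le

lemma Sset_pair {n i : ℕ} (hn : 2 ≤ n) (hi : i ∈ Finset.range n) :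
    ∃ T₁ ∈ Sset n i, ∃ T₂ ∈ Sset n i, T₁ ≠ T₂ := by
  have hin : i < n := Finset.mem_range.mp hi
  set j : ℕ := if i = 0 then 1 else 0 with hj
  have hji : j ≠ i := by
    rcases eq_or_ne i 0 with h | h <;> simp [hj, h] <;> omega
  have hjn : j < n := by
    rcases eq_or_ne i 0 with h | h <;> simp [hj, h] <;> omega
  refine ⟨{i}, ?_, {i, j}, ?_, ?_⟩
  · simp [Sset, Finset.singleton_subset_iff, Finset.mem_range, hin]
  · simp [Sset, Finset.insert_subset_iff, Finset.mem_range, hin, hjn]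
  · intro h
    have : j ∈ ({i} : Finset ℕ) := by rw [h]; simp
    exact hji (Finset.mem_singleton.mp this)

lemma Pr_lt_cf {n i : ℕ} (hn : 2 ≤ n) (hi : i ∈ Finset.range n)
    {T : Finset ℕ} (hT : T ∈ Sset n i) : Pr T < cf n i := by
  obtain ⟨T₁, h₁, T₂, h₂, hne⟩ := Sset_pair hn hi
  -- there is some T' ∈ Sset n i, T' ≠ T
  obtain ⟨T', hT', hTne⟩ : ∃ T' ∈ Sset n i, T' ≠ T := by
    rcases eq_or_ne T₁ T with h | h
    · exact ⟨T₂, h₂, by rw [← h]; exact hne.symm⟩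
    · exact ⟨T₁, h₁, h⟩
  have hrest : Pr T' ∣ ∏ S ∈ (Sset n i).erase T, Pr S :=
    Finset.dvd_prod_of_mem _ (Finset.mem_erase.mpr ⟨hTne, hT'⟩)
  have h2 : 2 ≤ ∏ S ∈ (Sset n i).erase T, Pr S :=
    le_trans (two_le_Pr T') (Nat.le_of_dvd (Finset.prod_pos
      (fun S _ => (Pr_prime S).pos)) hrest)
  have : cf n i = Pr T * ∏ S ∈ (Sset n i).erase T, Pr S :=
    (Finset.mul_prod_erase _ _ hT).symm
  rw [this]
  have hpos := (Pr_prime T).pos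
  nlinarith

lemma two_le_cf {n i : ℕ} (hn : 2 ≤ n) (hi : i ∈ Finset.range n) : 2 ≤ cf n i := by
  have h : ({i} : Finset ℕ) ∈ Sset n i := by
    simpa [Sset, Finset.singleton_subset_iff] using hi
  exact le_trans (two_le_Pr {i}) (Nat.le_of_dvd
    (Finset.prod_pos (fun S _ => (Pr_prime S).pos)) (Finset.dvd_prod_of_mem _ h))

lemma cf_injOn (n : ℕ) : Set.InjOn (cf n) (Finset.range n) := by
  intro i hi j hj h
  by_contra hne
  have hin : i < n := Finset.mem_range.mp hi
  have hSi : ({i} : Finset ℕ) ∈ Sset n i := by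
    simp [Sset, Finset.singleton_subset_iff, Finset.mem_range, hin]
  have hdi : Pr {i} ∣ cf n i := (Pr_dvd_cf_iff _).mpr hSi
  have hdj : Pr {i} ∣ cf n j := h ▸ hdi
  have : ({i} : Finset ℕ) ∈ Sset n j := (Pr_dvd_cf_iff _).mp hdj
  simp [Sset] at this
  exact hne this.2.symm

/-- For every `n ≥ 2` the class `H'` shatters a set of `n` integers (all `≥ 2`);
hence the VC-dimension of `H'` is infinite. -/
theorem stmt0 :
    ∀ n : ℕ, 2 ≤ n →
      ∃ C : Finset ℕ, C.card = n ∧ (∀ x ∈ C, 2 ≤ x) ∧ ShattersPrimes C := by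
  intro n hn
  classical
  refine ⟨(Finset.range n).image (cf n), ?_, ?_, ?_⟩
  · rw [Finset.card_image_of_injOn (by simpa using cf_injOn n), Finset.card_range]
  · intro x hx
    obtain ⟨i, hi, rfl⟩ := Finset.mem_image.mp hx
    exact two_le_cf hn hi
  · intro f
    set T : Finset ℕ := (Finset.range n).filter (fun i => f (cf n i) = false) with hT
    refine ⟨Pr T, Pr_prime T, ?_⟩
    intro c hc
    obtain ⟨i, hi, rfl⟩ := Finset.mem_image.mp hc
    have hdvd_iff : Pr T ∣ cf n i ↔ f (cf n i) = false := by
      rw [Pr_dvd_cf_iff]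
      constructor
      · intro hiT
        have h2 : i ∈ T := (Finset.mem_filter.mp hiT).2
        exact (Finset.mem_filter.mp h2).2
      · intro hf
        exact Finset.mem_filter.mpr
          ⟨Finset.mem_powerset.mpr (Finset.filter_subset _ _),
           Finset.mem_filter.mpr ⟨hi, hf⟩⟩
    cases hfc : f (cf n i) with
    | false =>
        have hd : Pr T ∣ cf n i := hdvd_iff.mpr hfc
        have hlt : Pr T < cf n i := by
          refine Pr_lt_cf hn hi ?_
          exact (Pr_dvd_cf_iff _).mp hd
        simp [hp, hd, hlt]
    | true =>
        have hd : ¬ Pr T ∣ cf n i := by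
          intro h; rw [hdvd_iff.mp h] at hfc; exact Bool.noConfusion hfc
        simp [hp, hd]
end

section
/- Let n ≥ 2, let p_1 < p_2 < ... < p_{2^n} be distinct primes, and let A_1, ..., A_{2^n} be an enumeration of all subsets of {1,...,n}. Define c_i = ∏_{k=1}^{2^n} p_k^{1_{A_k}(i)} for i = 1,...,n. Then for each k and i, h_{p_k}(c_i) = 1 − 1_{A_k}(i), i.e., the class {h_{p_k} : 1 ≤ k ≤ 2^n} shatters {c_1,...,c_n}. -/
/-- Let `n ≥ 2`, let `p 1 < … < p (2^n)` be primes and `A` an enumeration (a bijection) of all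
subsets of `{1,…,n}`.  With `c i = ∏_k (p k)^{1_{A k}(i)}`, one has
`h_{p k}(c i) = 1 - 1_{A k}(i)`, i.e. `h_{p k}(c i) = false ↔ i ∈ A k`;
in particular the class `{h_{p k}}` shatters `{c 1, …, c n}`. -/
theorem stmt1 (n : ℕ) (hn : 2 ≤ n)
    (p : Fin (2 ^ n) → ℕ) (hmono : StrictMono p) (hprime : ∀ k, (p k).Prime)
    (A : Fin (2 ^ n) → Finset (Fin n)) (hA : Function.Bijective A)
    (c : Fin n → ℕ) (hc : ∀ i, c i = ∏ k, (p k) ^ (if i ∈ A k then 1 else 0)) :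
    (∀ k i, (hp (p k) (c i) = false ↔ i ∈ A k)) ∧
      (∀ f : Fin n → Bool, ∃ k, ∀ i, hp (p k) (c i) = f i) := by
  have hcpos : ∀ i, 0 < c i := by
    intro i
    rw [hc]
    exact Finset.prod_pos fun k _ => pow_pos (hprime k).pos _
  -- divisibility
  have hdvd : ∀ k i, i ∈ A k → p k ∣ c i := by
    intro k i hik
    rw [hc]
    have := Finset.dvd_prod_of_mem (fun k => (p k) ^ (if i ∈ A k then 1 else 0))
      (Finset.mem_univ k)
    simpa [hik] using this
  -- non-divisibility
  have hndvd : ∀ k i, i ∉ A k → ¬ p k ∣ c i := by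
    intro k i hik hd
    rw [hc] at hd
    obtain ⟨k', -, hd'⟩ := (Nat.Prime.prime (hprime k)).exists_mem_finset_dvd hd
    by_cases h' : i ∈ A k'
    · simp only [h', if_pos, pow_one] at hd'
      have : p k = p k' := ((Nat.prime_dvd_prime_iff_eq (hprime k) (hprime k')).mp hd')
      have : k = k' := hmono.injective this
      exact hik (this ▸ h')
    · simp [h'] at hd'
      exact (hprime k).one_lt.ne' hd'
  -- another index containing i
  have hlt : ∀ k i, i ∈ A k → p k < c i := by
    intro k i hik
    obtain ⟨ka, hka⟩ := hA.2 {i}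
    obtain ⟨kb, hkb⟩ := hA.2 Finset.univ
    have hab : ka ≠ kb := by
      intro h
      have : ({i} : Finset (Fin n)) = Finset.univ := by rw [← hka, ← hkb, h]
      have := congrArg Finset.card this
      simp [Finset.card_univ] at this
      omega
    obtain ⟨k', hk'ne, hik'⟩ : ∃ k', k' ≠ k ∧ i ∈ A k' := by
      by_cases h : k = ka
      · exact ⟨kb, fun hh => hab (h ▸ hh.symm), by rw [hkb]; exact Finset.mem_univ i⟩
      · exact ⟨ka, fun hh => h hh.symm, by rw [hka]; exact Finset.mem_singleton_self i⟩
    have hco : Nat.Coprime (p k) (p k') :=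
      (Nat.coprime_primes (hprime k) (hprime k')).mpr
        (fun h => hk'ne (hmono.injective h.symm))
    have hmul : p k * p k' ∣ c i :=
      Nat.Coprime.mul_dvd_of_dvd_of_dvd hco (hdvd k i hik) (hdvd k' i hik')
    have hle : p k * p k' ≤ c i := Nat.le_of_dvd (hcpos i) hmul
    have : p k * 2 ≤ p k * p k' := Nat.mul_le_mul_left _ (hprime k').two_le
    have hpk := (hprime k).pos
    omega
  have main : ∀ k i, (hp (p k) (c i) = false ↔ i ∈ A k) := by
    intro k i
    simp only [hp, Bool.not_eq_false', decide_eq_true_eq, Bool.not_eq_false]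
    constructor
    · intro ⟨hd, _⟩
      by_contra h
      exact hndvd k i h hd
    · intro h
      exact ⟨hdvd k i h, hlt k i h⟩
  refine ⟨main, ?_⟩
  intro f
  obtain ⟨k, hk⟩ := hA.2 {i | f i = false}.toFinset
  refine ⟨k, fun i => ?_⟩
  by_cases h : i ∈ A k
  · have := (main k i).mpr h
    rw [this]
    have : f i = false := by
      rw [hk] at h; simpa using h
    exact this.symm
  · have h1 : hp (p k) (c i) ≠ false := fun hh => h ((main k i).mp hh)
    have h2 : f i ≠ false := by
      intro hh
      apply h
      rw [hk]; simpa using hh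
    simp only [Bool.ne_false_iff] at h1 h2
    rw [h1, h2]
end

section
/- If the class H' = {h_p : p prime} shatters a set {c_1, ..., c_n} of integers ≥ 2, then each c_i is divisible by a product of 2^{n-1} distinct primes, and the product c_1 · c_2 · ... · c_n has at least 2^n − 1 distinct prime factors. -/
open Finset

theorem hp_eq_false_iff {p x : ℕ} : hp p x = false ↔ p ∣ x ∧ p < x := by
  simp [hp]

theorem Nat.Prime.mem_primeFactors_of_hp_eq_false {p x : ℕ} (hprime : p.Prime)
    (h : hp p x = false) : p ∈ x.primeFactors := by
  obtain ⟨hdvd, hlt⟩ := hp_eq_false_iff.1 h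
  exact Nat.mem_primeFactors.2 ⟨hprime, hdvd, Nat.ne_zero_of_lt hlt⟩

theorem card_filter_apply_eq_bool {ι : Type*} [Fintype ι] [DecidableEq ι] (i : ι) (b : Bool) :
    #{f : ι → Bool | f i = b} = 2 ^ (Fintype.card ι - 1) := by
  rw [← Fintype.piFinset_univ]
  simpa using Fintype.card_filter_piFinset_const_eq_of_mem univ i (mem_univ b)

section Shattering

variable {ι : Type*} {c : ι → ℕ} {p : (ι → Bool) → ℕ}

theorem injective_of_hp_eq (hspec : ∀ f i, hp (p f) (c i) = f i) : Function.Injective p :=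
  fun f g hfg ↦ funext fun i ↦ by rw [← hspec f i, ← hspec g i, hfg]

theorem mem_primeFactors_of_apply_eq_false (hprime : ∀ f, (p f).Prime)
    (hspec : ∀ f i, hp (p f) (c i) = f i) {f : ι → Bool} {i : ι} (hfi : f i = false) :
    p f ∈ (c i).primeFactors :=
  (hprime f).mem_primeFactors_of_hp_eq_false ((hspec f i).trans hfi)

variable [Fintype ι] [DecidableEq ι]

theorem prod_image_filter_apply_eq_false_dvd (hprime : ∀ f, (p f).Prime)
    (hspec : ∀ f i, hp (p f) (c i) = f i) (i : ι) :
    ∏ q ∈ image p {f | f i = false}, q ∣ c i := by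
  have hsub : image p {f | f i = false} ⊆ (c i).primeFactors := by
    simp only [image_subset_iff, mem_filter, mem_univ, true_and]
    exact fun f hfi ↦ mem_primeFactors_of_apply_eq_false hprime hspec hfi
  exact (prod_dvd_prod_of_subset _ _ _ hsub).trans (Nat.prod_primeFactors_dvd _)

theorem two_pow_card_sub_one_le_card_primeFactors_prod (hprime : ∀ f, (p f).Prime)
    (hspec : ∀ f i, hp (p f) (c i) = f i) :
    2 ^ Fintype.card ι - 1 ≤ #(∏ i, c i).primeFactors := by
  have hc : ∀ i, c i ≠ 0 := fun i ↦ (Nat.mem_primeFactors.1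
    (mem_primeFactors_of_apply_eq_false hprime hspec (f := fun _ ↦ false) (i := i) rfl)).2.2
  have hprod : ∏ i, c i ≠ 0 := prod_ne_zero_iff.2 fun i _ ↦ hc i
  have hsub : image p (univ.erase fun _ ↦ true) ⊆ (∏ i, c i).primeFactors := by
    simp only [image_subset_iff, mem_erase, mem_univ, and_true, Function.ne_iff]
    rintro f ⟨i, hfi⟩
    exact Nat.primeFactors_mono (dvd_prod_of_mem c (mem_univ i)) hprod
      (mem_primeFactors_of_apply_eq_false hprime hspec (Bool.eq_false_iff.2 hfi))
  calc 2 ^ Fintype.card ι - 1 = #(univ.erase fun (_ : ι) ↦ true) := by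
        simp [card_erase_of_mem]
    _ = #(image p (univ.erase fun _ ↦ true)) :=
        (card_image_of_injective _ (injective_of_hp_eq hspec)).symm
    _ ≤ _ := card_le_card hsub

end Shattering

theorem stmt3_general (n : ℕ) (c : Fin n → ℕ)
    (hshat : ∀ f : Fin n → Bool, ∃ p : ℕ, p.Prime ∧ ∀ i, hp p (c i) = f i) :
    (∀ i, ∃ P : Finset ℕ, P.card = 2 ^ (n - 1) ∧ (∀ q ∈ P, q.Prime) ∧ (∏ q ∈ P, q) ∣ c i) ∧
      2 ^ n - 1 ≤ (∏ i, c i).primeFactors.card := by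
  choose p hprime hspec using hshat
  refine ⟨fun i ↦ ⟨image p {f | f i = false}, ?_, ?_, ?_⟩, ?_⟩
  · rw [card_image_of_injective _ (injective_of_hp_eq hspec), card_filter_apply_eq_bool,
      Fintype.card_fin]
  · simp only [mem_image]
    rintro _ ⟨f, -, rfl⟩
    exact hprime f
  · exact prod_image_filter_apply_eq_false_dvd hprime hspec i
  · simpa using two_pow_card_sub_one_le_card_primeFactors_prod hprime hspec

/-- If `H' = {h_p : p prime}` shatters a set `{c 1, …, c n}` of integers `≥ 2`, then each `c i`
is divisible by a product of `2^(n-1)` distinct primes, and `∏ i, c i` has at least `2^n - 1`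
distinct prime factors. -/
theorem stmt3 (n : ℕ) (c : Fin n → ℕ) (hc2 : ∀ i, 2 ≤ c i) (hinj : Function.Injective c)
    (hshat : ∀ f : Fin n → Bool, ∃ p : ℕ, p.Prime ∧ ∀ i, hp p (c i) = f i) :
    (∀ i, ∃ P : Finset ℕ, P.card = 2 ^ (n - 1) ∧ (∀ q ∈ P, q.Prime) ∧ (∏ q ∈ P, q) ∣ c i) ∧
      2 ^ n - 1 ≤ (∏ i, c i).primeFactors.card :=
  stmt3_general n c hshat
end

section
/- Let S = ((x_1, r(x_1)), ..., (x_m, r(x_m))) be a labeled sample where r(x) = 1 iff x is prime, and let a_1,...,a_m ≥ 0 sum to 1. Define D(S,d) = Σ_{i : r(x_i)=0} a_i · 1[d ∣ x_i and x_i > d], and let d_S be the smallest d ≥ 2 maximizing D(S,d). Then d_S is prime. -/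
/-- The weighted mass `D(S,d)` of composite sample points `x i` with `d ∣ x i` and `x i > d`. -/
def Dw (m : ℕ) (x : Fin m → ℕ) (a : Fin m → ℝ) (d : ℕ) : ℝ :=
  ∑ i, if ¬ (x i).Prime ∧ d ∣ x i ∧ d < x i then a i else 0

/-- If `d_S ≥ 2` is the smallest maximizer of `D(S,·)` over `{d : d ≥ 2}`, then `d_S` is prime. -/
theorem stmt7 (m : ℕ) (x : Fin m → ℕ) (hx : ∀ i, 2 ≤ x i)
    (a : Fin m → ℝ) (ha : ∀ i, 0 ≤ a i) (hsum : ∑ i, a i = 1)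
    (dS : ℕ) (hdS : 2 ≤ dS)
    (hmax : ∀ d, 2 ≤ d → Dw m x a d ≤ Dw m x a dS)
    (hmin : ∀ d, 2 ≤ d → (∀ e, 2 ≤ e → Dw m x a e ≤ Dw m x a d) → dS ≤ d) :
    dS.Prime := by
  by_contra hnp
  obtain ⟨p, hp, hpd⟩ := Nat.exists_prime_and_dvd (n := dS) (by omega)
  have hplt : p < dS := lt_of_le_of_ne (Nat.le_of_dvd (by omega) hpd)
    (fun h => hnp (h ▸ hp))
  have hDle : Dw m x a dS ≤ Dw m x a p := by
    apply Finset.sum_le_sum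
    intro i _
    by_cases h : ¬ (x i).Prime ∧ dS ∣ x i ∧ dS < x i
    · rw [if_pos h, if_pos ⟨h.1, hpd.trans h.2.1, lt_trans hplt h.2.2⟩]
    · rw [if_neg h]
      split <;> simp [ha i]
  have := hmin p hp.two_le (fun e he => (hmax e he).trans hDle)
  omega
end

section
/- For any m ≥ 1, there exists a sample x_1, ..., x_m of integers ≥ 2 (namely x_i = p_{2i−1} p_{2i}, products of consecutive distinct primes) such that every x_i is composite and for every d ≥ 2 at most one x_i satisfies (d ∣ x_i and x_i > d); hence the weighted empirical risk L_a(S,d) = 1 − D(S,d) ≥ 1 − max_i a_i for all d. -/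
lemma div_pq {p q d : ℕ} (hp : p.Prime) (hq : q.Prime)
    (hd2 : 2 ≤ d) (hdvd : d ∣ p * q) (hlt : d < p * q) : d = p ∨ d = q := by
  by_cases h : p ∣ d
  · obtain ⟨e, rfl⟩ := h
    have he : e ∣ q := (mul_dvd_mul_iff_left hp.pos.ne').mp hdvd
    rcases (Nat.dvd_prime hq).mp he with rfl | rfl
    · left; simp
    · exact absurd hlt (lt_irrefl _)
  · have hc : Nat.Coprime p d := (Nat.Prime.coprime_iff_not_dvd hp).mpr h
    have hdq : d ∣ q := (Nat.Coprime.dvd_of_dvd_mul_left hc.symm hdvd)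
    rcases (Nat.dvd_prime hq).mp hdq with rfl | rfl
    · omega
    · right; rfl

/-- Taking `x i = p_{2i-1} p_{2i}` (products of consecutive distinct primes), every `x i` is a
composite integer `≥ 2`, for every `d ≥ 2` at most one sample point satisfies
`d ∣ x i ∧ x i > d`, and hence the weighted empirical risk satisfies
`L_a(S,d) = 1 - D(S,d) ≥ 1 - max_i a i` for all `d ≥ 2`. -/
theorem stmt9 (m : ℕ) (hm : 1 ≤ m) :
    ∃ x : Fin m → ℕ,
      (∀ i : Fin m, x i = Nat.nth Nat.Prime (2 * i) * Nat.nth Nat.Prime (2 * i + 1)) ∧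
      (∀ i, 2 ≤ x i ∧ ¬ (x i).Prime) ∧
      (∀ d, 2 ≤ d → ∀ i j : Fin m,
        (d ∣ x i ∧ d < x i) → (d ∣ x j ∧ d < x j) → i = j) ∧
      ∀ a : Fin m → ℝ, (∀ i, 0 ≤ a i) → ∑ i, a i = 1 →
        ∀ d, 2 ≤ d → ∃ j : Fin m,
          (∀ i, a i ≤ a j) ∧ 1 - Dw m x a d ≥ 1 - a j := by
  classical
  set x : Fin m → ℕ := fun i => Nat.nth Nat.Prime (2 * i) * Nat.nth Nat.Prime (2 * i + 1) with hx
  have hprime : ∀ n : ℕ, (Nat.nth Nat.Prime n).Prime := fun n => Nat.prime_nth_prime n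
  have hinj : Function.Injective (Nat.nth Nat.Prime) :=
    Nat.nth_injective Nat.infinite_setOf_prime
  have hcomp : ∀ i : Fin m, 2 ≤ x i ∧ ¬ (x i).Prime := by
    intro i
    have h1 := (hprime (2 * i)).two_le
    have h2 := (hprime (2 * i + 1)).two_le
    constructor
    · calc 2 ≤ Nat.nth Nat.Prime (2 * i) := h1
        _ ≤ x i := Nat.le_mul_of_pos_right _ (by omega)
    · exact Nat.not_prime_mul (by omega) (by omega)
  have huniq : ∀ d, 2 ≤ d → ∀ i j : Fin m,
      (d ∣ x i ∧ d < x i) → (d ∣ x j ∧ d < x j) → i = j := by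
    intro d hd i j ⟨hdi, hlti⟩ ⟨hdj, hltj⟩
    have h1 := div_pq (hprime (2 * i)) (hprime (2 * i + 1)) hd hdi hlti
    have h2 := div_pq (hprime (2 * j)) (hprime (2 * j + 1)) hd hdj hltj
    have : (2 * (i : ℕ) = 2 * (j : ℕ)) ∨ (2 * (i : ℕ) = 2 * (j : ℕ) + 1) ∨
        (2 * (i : ℕ) + 1 = 2 * (j : ℕ)) ∨ (2 * (i : ℕ) + 1 = 2 * (j : ℕ) + 1) := by
      rcases h1 with h1 | h1 <;> rcases h2 with h2 | h2
      · exact Or.inl (hinj (h1 ▸ h2 ▸ rfl))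
      · exact Or.inr (Or.inl (hinj (h1 ▸ h2 ▸ rfl)))
      · exact Or.inr (Or.inr (Or.inl (hinj (h1 ▸ h2 ▸ rfl))))
      · exact Or.inr (Or.inr (Or.inr (hinj (h1 ▸ h2 ▸ rfl))))
    have : (i : ℕ) = (j : ℕ) := by omega
    exact Fin.ext this
  refine ⟨x, fun i => rfl, hcomp, huniq, ?_⟩
  intro a ha hsum d hd
  have : Nonempty (Fin m) := ⟨⟨0, by omega⟩⟩
  obtain ⟨j, _, hj⟩ := Finset.exists_max_image Finset.univ a ⟨⟨0, by omega⟩, Finset.mem_univ _⟩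
  refine ⟨j, fun i => hj i (Finset.mem_univ i), ?_⟩
  have hDw : Dw m x a d ≤ a j := by
    by_cases hex : ∃ i0 : Fin m, d ∣ x i0 ∧ d < x i0
    · obtain ⟨i0, hi0⟩ := hex
      have : Dw m x a d = a i0 := by
        rw [Dw]
        rw [Finset.sum_eq_single_of_mem i0 (Finset.mem_univ i0)]
        · simp [hi0, (hcomp i0).2]
        · intro b _ hb
          rw [if_neg]
          rintro ⟨_, hb1, hb2⟩
          exact hb (huniq d hd b i0 ⟨hb1, hb2⟩ hi0)
      rw [this]; exact hj i0 (Finset.mem_univ i0)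
    · have : Dw m x a d = 0 := by
        rw [Dw]
        apply Finset.sum_eq_zero
        intro i _
        rw [if_neg]
        rintro ⟨_, h1, h2⟩
        exact hex ⟨i, h1, h2⟩
      rw [this]
      exact le_trans (ha j) (le_refl _)
  linarith
end

section
/- Let X be uniformly distributed on {2,...,n}. Then the generalization error L_n(h_2) = P(h_2(X) ≠ r(X)) satisfies |L_n(h_2) − 1/2| ≤ (3/2 + π(n))/(n−1), where r(x)=1 iff x prime and h_2(x)=0 iff 2 ∣ x and x > 2. In particular L_n(h_2) → 1/2 as n → ∞. -/
/-!
On `{2, …, n}` the classifier `h_2` errs exactly at the odd composites. There are `⌊(n - 1)/2⌋`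
odd numbers in this range, and at most `π(n)` of them are prime, so the error count lies within
`π(n) + 1/2` of `(n - 1)/2`. Chebyshev's bound `π(n) = O(n / log n)` makes the primes negligible.
-/

open Finset Filter Topology Real

/-- The generalization error of `h_2` under the uniform distribution on `{2,…,n}`, i.e. the
proportion of `x ∈ {2,…,n}` with `h_2(x) ≠ r(x)`, where `h_2(x) = 0` iff `2 ∣ x ∧ x > 2`
and `r(x) = 1` iff `x` is prime. -/
noncomputable def L2 (n : ℕ) : ℝ :=
  (((Finset.Icc 2 n).filter
      (fun x => (if 2 ∣ x ∧ 2 < x then (0 : ℕ) else 1) ≠ (if x.Prime then 1 else 0))).card : ℝ)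
    / ((n : ℝ) - 1)

theorem card_Icc_two_filter_not_two_dvd (n : ℕ) : #{x ∈ Icc 2 n | ¬ 2 ∣ x} = (n - 1) / 2 := by
  induction n with
  | zero => rfl
  | succ n ih =>
    rcases Nat.lt_or_ge n 1 with h | h
    · interval_cases n; rfl
    rw [← insert_Icc_right_eq_Icc_add_one (by omega), filter_insert]
    split_ifs with hd
    · rw [ih]; omega
    · rw [card_insert_of_notMem (by simp), ih]; omega

theorem ite_two_dvd_ne_ite_prime_iff {x : ℕ} (hx : 2 ≤ x) :
    (if 2 ∣ x ∧ 2 < x then (0 : ℕ) else 1) ≠ (if x.Prime then 1 else 0) ↔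
      ¬ 2 ∣ x ∧ ¬ x.Prime := by
  by_cases hd : 2 ∣ x
  · rcases hx.eq_or_lt with rfl | hlt
    · simp [Nat.prime_two]
    · have : ¬ x.Prime := fun hp => by
        have := (hp.even_iff.mp (even_iff_two_dvd.mpr hd)); omega
      simp [hd, hlt, this]
  · by_cases hp : x.Prime <;> simp [hd, hp]

theorem L2_eq_card_div (n : ℕ) : L2 n = #{x ∈ Icc 2 n | ¬ 2 ∣ x ∧ ¬ x.Prime} / ((n : ℝ) - 1) := by
  unfold L2
  congr 3
  exact filter_congr fun x hx => ite_two_dvd_ne_ite_prime_iff (mem_Icc.mp hx).1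

theorem card_odd_nonprime_le (n : ℕ) :
    #{x ∈ Icc 2 n | ¬ 2 ∣ x ∧ ¬ x.Prime} ≤ (n - 1) / 2 := by
  rw [← card_Icc_two_filter_not_two_dvd]
  exact card_le_card (monotone_filter_right _ fun _ _ => And.left)

theorem le_card_odd_nonprime_add_primeCounting (n : ℕ) :
    (n - 1) / 2 ≤ #{x ∈ Icc 2 n | ¬ 2 ∣ x ∧ ¬ x.Prime} + Nat.primeCounting n := by
  rw [← card_Icc_two_filter_not_two_dvd, ← Nat.primesLE_card_eq_primeCounting]
  calc _ ≤ #({x ∈ Icc 2 n | ¬ 2 ∣ x ∧ ¬ x.Prime} ∪ Nat.primesLE n) :=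
      card_le_card fun x hx => by
        simp only [mem_filter, mem_Icc] at hx
        by_cases hp : x.Prime
        · exact mem_union_right _ (Nat.mem_primesLE.mpr ⟨hx.1.2, hp⟩)
        · exact mem_union_left _ (mem_filter.mpr ⟨mem_Icc.mpr hx.1, hx.2, hp⟩)
    _ ≤ _ := card_union_le _ _

theorem abs_L2_sub_half_le (n : ℕ) (hn : 2 ≤ n) :
    |L2 n - 1 / 2| ≤ (3 / 2 + (Nat.primeCounting n : ℝ)) / ((n : ℝ) - 1) := by
  set E := #{x ∈ Icc 2 n | ¬ 2 ∣ x ∧ ¬ x.Prime} with hE_def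
  have hpos : (0 : ℝ) < n - 1 := by
    have : (2 : ℝ) ≤ n := by exact_mod_cast hn
    linarith
  have hE : L2 n - 1 / 2 = (E - ((n : ℝ) - 1) / 2) / ((n : ℝ) - 1) := by
    rw [L2_eq_card_div, ← hE_def]
    field_simp
  have hle : 2 * E + 1 ≤ n := by have := card_odd_nonprime_le n; omega
  have hge : n ≤ 2 * (E + Nat.primeCounting n) + 2 := by
    have := le_card_odd_nonprime_add_primeCounting n; omega
  have hleR : 2 * (E : ℝ) + 1 ≤ n := by exact_mod_cast hle
  have hgeR : (n : ℝ) ≤ 2 * (E + Nat.primeCounting n) + 2 := by exact_mod_cast hge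
  rw [hE, abs_div, abs_of_pos hpos]
  gcongr
  rw [abs_le]
  constructor <;> linarith

theorem tendsto_primeCounting_div_nhds_zero :
    Tendsto (fun n : ℕ => (Nat.primeCounting n : ℝ) / n) atTop (𝓝 0) := by
  have hlog : Tendsto (fun n : ℕ => (log 4 + 1) / log n) atTop (𝓝 0) :=
    (tendsto_log_atTop.comp tendsto_natCast_atTop_atTop).const_div_atTop _
  have hbound := tendsto_natCast_atTop_atTop.eventually
    (Chebyshev.eventually_primeCounting_le (ε := 1) one_pos)
  refine squeeze_zero' (.of_forall fun n => by positivity) ?_ hlog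
  filter_upwards [hbound, eventually_gt_atTop 0] with n hn hn0
  rw [Nat.floor_natCast] at hn
  rw [div_le_iff₀ (Nat.cast_pos.mpr hn0)]
  exact hn.trans_eq (by ring)

theorem div_sub_one_le_two_mul_div {a x : ℝ} (ha : 0 ≤ a) (hx : 2 ≤ x) :
    a / (x - 1) ≤ 2 * (a / x) := by
  rw [mul_div_assoc', div_le_div_iff₀ (by linarith) (by linarith)]
  nlinarith

/-- `|L_n(h_2) - 1/2| ≤ (3/2 + π(n))/(n-1)` for `n ≥ 2`; in particular `L_n(h_2) → 1/2`. -/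
theorem stmt11 :
    (∀ n : ℕ, 2 ≤ n →
        |L2 n - 1 / 2| ≤ (3 / 2 + (Nat.primeCounting n : ℝ)) / ((n : ℝ) - 1)) ∧
      Filter.Tendsto L2 Filter.atTop (nhds (1 / 2)) := by
  refine ⟨abs_L2_sub_half_le, ?_⟩
  have hbound :
      Tendsto (fun n : ℕ => 2 * ((3 / 2 + (Nat.primeCounting n : ℝ)) / n)) atTop (𝓝 0) := by
    simpa [add_div] using ((tendsto_const_div_atTop_nhds_zero_nat (3 / 2)).add
      tendsto_primeCounting_div_nhds_zero).const_mul 2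
  refine tendsto_sub_nhds_zero_iff.mp (squeeze_zero_norm' ?_ hbound)
  filter_upwards [eventually_ge_atTop 2] with n hn
  exact (abs_L2_sub_half_le n hn).trans
    (div_sub_one_le_two_mul_div (by positivity) (by exact_mod_cast hn))
end
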